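/- Given points x^α, x^β in Σ_2 constructed as in the preceding context from distinct α, β ∈ {0,1}^ℕ with {j : α(j) ≠ β(j)} infinite, the lower distributional function satisfies Φ_{x^α,x^β}(δ) = 0 for every 0 < δ < 1; i.e., the pair (x^α, x^β) is extremal distributionally scrambled. -/

import Mathlib

open Filter

/-- Metric on Σ₂ = {0,1}^ℕ : d(u,v) = Σ_{i≥1} δ(u_i,v_i)/2^i (coordinates 0-indexed). -/
noncomputable def dist2 (u v : ℕ → Bool) : ℝ :=
  ∑' i : ℕ, if u i = v i then 0 else (1/2)^(i+1)

/-- The shift map. -/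
def shift (u : ℕ → Bool) : ℕ → Bool := fun n => u (n + 1)

/-- Binary complement of a word. -/
def wordCompl (B : List Bool) : List Bool := B.map (fun b => !b)

/-- Morse blocks: M_0 = 0, M_{i+1} = M_i followed by its complement. -/
def morseBlock : ℕ → List Bool
  | 0 => [false]
  | i + 1 => morseBlock i ++ wordCompl (morseBlock i)

/-- The Morse sequence, the limit of the Morse blocks. -/
def morse : ℕ → Bool := fun n => (morseBlock (n + 1)).getD n false

open Classical in
/-- Infinite concatenation of a sequence of (nonempty) blocks. -/
noncomputable def concatSeq (B : ℕ → List Bool) (k : ℕ) : Bool :=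
  if h : ∃ n, ∑ i ∈ Finset.range n, (B i).length ≤ k ∧
      k < ∑ i ∈ Finset.range (n + 1), (B i).length then
    (B h.choose).getD (k - ∑ i ∈ Finset.range h.choose, (B i).length) false
  else false

open Classical in
/-- Lower distributional function. -/
noncomputable def Phi (x y : ℕ → Bool) (δ : ℝ) : ℝ :=
  liminf (fun m : ℕ =>
    (((Finset.Ioo 0 m).filter (fun k => dist2 (shift^[k] x) (shift^[k] y) < δ)).card : ℝ) / m)
    atTop

open Classical in
/-- Upper distributional function. -/
noncomputable def PhiStar (x y : ℕ → Bool) (ε : ℝ) : ℝ :=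
  limsup (fun m : ℕ =>
    (((Finset.Ioo 0 m).filter (fun k => dist2 (shift^[k] x) (shift^[k] y) < ε)).card : ℝ) / m)
    atTop

/-- A Li-Yorke scrambled triple. -/
noncomputable def ScrTriple (x y z : ℕ → Bool) : Prop :=
  x ≠ y ∧ x ≠ z ∧ y ≠ z ∧
  liminf (fun k : ℕ => max (max (dist2 (shift^[k] x) (shift^[k] y))
      (dist2 (shift^[k] x) (shift^[k] z))) (dist2 (shift^[k] y) (shift^[k] z))) atTop = 0 ∧
  0 < limsup (fun k : ℕ => min (min (dist2 (shift^[k] x) (shift^[k] y))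
      (dist2 (shift^[k] x) (shift^[k] z))) (dist2 (shift^[k] y) (shift^[k] z))) atTop

/-- Concatenation of Morse blocks M_{a j}, complemented where `e j = true`. -/
noncomputable def blockPt (a : ℕ → ℕ) (e : ℕ → Bool) : ℕ → Bool :=
  concatSeq (fun j => if e j then wordCompl (morseBlock (a j)) else morseBlock (a j))

/-- A point occurring as in Theorem 2: odd-position blocks fixed, even-position blocks chosen by α. -/
noncomputable def xpt (a : ℕ → ℕ) (α : ℕ → Bool) : ℕ → Bool :=
  blockPt a (fun j => if j % 2 = 0 then α (j / 2) else false)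

/-- Cantor set predicate. -/
def IsCantorSet (C : Set (ℕ → Bool)) : Prop :=
  C.Nonempty ∧ IsCompact C ∧ Perfect C ∧ IsTotallyDisconnected C

/-- The Morse minimal set: orbit closure of the Morse sequence. -/
def morseMinimal : Set (ℕ → Bool) := closure {y | ∃ k : ℕ, y = shift^[k] morse}

/-!
On the `2j`-th block, where `α j ≠ β j`, the points `x^α` and `x^β` are complementary, so for
every shift `k` into that block except the last `N` ones, `d(σᵏx^α, σᵏx^β) ≥ 1 - 2⁻ᴺ > δ`.
Since `a n / a (n + 1) → 0`, the earlier blocks are negligible against the length `2 ^ a (2j)`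
of this one, so at the end of the block the proportion of close times is tiny. This happens
for infinitely many `j`, hence the lower density is `0`.
-/

open Finset

lemma liminf_eq_zero_of_frequently_le {ι : Type*} {l : Filter ι} [l.NeBot] {f : ι → ℝ}
    (h0 : ∀ i, 0 ≤ f i) (hbdd : IsBoundedUnder (· ≤ ·) l f)
    (hfreq : ∀ ε > 0, ∃ᶠ i in l, f i ≤ ε) : liminf f l = 0 := by
  refine le_antisymm (le_of_forall_pos_le_add fun ε hε => ?_)
    (le_liminf_of_le hbdd.isCoboundedUnder_ge (.of_forall h0))
  simpa using liminf_le_of_frequently_le (hfreq ε hε) (isBoundedUnder_of ⟨0, h0⟩)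

lemma shift_iterate_apply (u : ℕ → Bool) (k n : ℕ) : shift^[k] u n = u (n + k) := by
  induction k generalizing n with
  | zero => rfl
  | succ k ih => rw [Function.iterate_succ_apply', shift, ih, Nat.add_right_comm, Nat.add_assoc]

lemma one_sub_half_pow_le_dist2 {u v : ℕ → Bool} {N : ℕ} (h : ∀ t < N, u t ≠ v t) :
    1 - (1 / 2 : ℝ) ^ N ≤ dist2 u v := by
  have hle : ∀ i, (if u i = v i then (0 : ℝ) else (1 / 2) ^ (i + 1)) ≤ (1 / 2) ^ (i + 1) :=
    fun i => by split_ifs <;> [positivity; rfl]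
  have hnonneg : ∀ i, 0 ≤ (if u i = v i then (0 : ℝ) else (1 / 2) ^ (i + 1)) :=
    fun i => by split_ifs <;> positivity
  have hsum : Summable fun i => if u i = v i then (0 : ℝ) else (1 / 2) ^ (i + 1) :=
    .of_nonneg_of_le hnonneg hle ((summable_nat_add_iff 1).2 summable_geometric_two)
  have hgeom : ∀ n, ∑ i ∈ range n, (1 / 2 : ℝ) ^ (i + 1) = 1 - (1 / 2) ^ n := by
    intro n
    induction n with
    | zero => simp
    | succ n ih => rw [sum_range_succ, ih]; ring
  calc 1 - (1 / 2 : ℝ) ^ N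
      = ∑ i ∈ range N, (if u i = v i then (0 : ℝ) else (1 / 2) ^ (i + 1)) := by
        rw [← hgeom]
        exact sum_congr rfl fun i hi => (if_neg (h i (mem_range.1 hi))).symm
    _ ≤ dist2 u v := hsum.sum_le_tsum _ fun i _ => hnonneg i

open Classical in
noncomputable def closeCount (x y : ℕ → Bool) (δ : ℝ) (m : ℕ) : ℕ :=
  #{k ∈ Ioo 0 m | dist2 (shift^[k] x) (shift^[k] y) < δ}

lemma Phi_eq_liminf_closeCount (x y : ℕ → Bool) (δ : ℝ) :
    Phi x y δ = liminf (fun m : ℕ => (closeCount x y δ m : ℝ) / m) atTop := rfl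

lemma closeCount_le (x y : ℕ → Bool) (δ : ℝ) (m : ℕ) : closeCount x y δ m ≤ m := by
  classical
  calc closeCount x y δ m ≤ #(Ioo 0 m) := card_filter_le _ _
    _ ≤ m := by rw [Nat.card_Ioo]; omega

/-- For `S ≤ k ≤ S + L - N` the shifted points disagree in their first `N` coordinates, hence
`d(σᵏx, σᵏy) ≥ 1 - 2⁻ᴺ ≥ δ`. -/
lemma closeCount_le_of_disagree {x y : ℕ → Bool} {S L N : ℕ} {δ : ℝ}
    (hδ : δ ≤ 1 - (1 / 2) ^ N) (hxy : ∀ t, S ≤ t → t < S + L → x t ≠ y t) :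
    closeCount x y δ (S + L) ≤ S + N := by
  classical
  have hsub : {k ∈ Ioo 0 (S + L) | dist2 (shift^[k] x) (shift^[k] y) < δ}
      ⊆ range S ∪ Ioo (S + L - N) (S + L) := by
    intro k hk
    simp only [mem_filter, mem_Ioo] at hk
    simp only [mem_union, mem_range, mem_Ioo]
    by_contra! hfar
    have hdist : 1 - (1 / 2 : ℝ) ^ N ≤ dist2 (shift^[k] x) (shift^[k] y) :=
      one_sub_half_pow_le_dist2 fun t ht => by
        rw [shift_iterate_apply, shift_iterate_apply]
        exact hxy _ (by omega) (by omega)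
    linarith [hk.2]
  calc closeCount x y δ (S + L) ≤ #(range S ∪ Ioo (S + L - N) (S + L)) := card_le_card hsub
    _ ≤ #(range S) + #(Ioo (S + L - N) (S + L)) := card_union_le _ _
    _ ≤ S + N := by rw [card_range, Nat.card_Ioo]; omega

lemma length_wordCompl (B : List Bool) : (wordCompl B).length = B.length :=
  List.length_map _

lemma getD_wordCompl {B : List Bool} {r : ℕ} (h : r < B.length) :
    (wordCompl B).getD r false = !B.getD r false := by
  rw [List.getD_eq_getElem _ _ (by rwa [length_wordCompl]), List.getD_eq_getElem _ _ h]
  simp [wordCompl]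

lemma length_morseBlock (i : ℕ) : (morseBlock i).length = 2 ^ i := by
  induction i with
  | zero => rfl
  | succ i ih => rw [morseBlock, List.length_append, length_wordCompl, ih, pow_succ, mul_two]

lemma concatSeq_apply (B : ℕ → List Bool) {n k : ℕ}
    (h₁ : ∑ i ∈ range n, (B i).length ≤ k) (h₂ : k < ∑ i ∈ range (n + 1), (B i).length) :
    concatSeq B k = (B n).getD (k - ∑ i ∈ range n, (B i).length) false := by
  have hex : ∃ m, ∑ i ∈ range m, (B i).length ≤ k ∧ k < ∑ i ∈ range (m + 1), (B i).length :=
    ⟨n, h₁, h₂⟩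
  have hmono : ∀ {m m'}, m ≤ m' → ∑ i ∈ range m, (B i).length ≤ ∑ i ∈ range m', (B i).length :=
    fun h => sum_le_sum_of_subset (range_subset_range.2 h)
  obtain ⟨hc₁, hc₂⟩ := hex.choose_spec
  have hn : hex.choose = n := by
    by_contra hne
    rcases Nat.lt_or_gt_of_ne hne with h | h
    · exact absurd (hmono (show hex.choose + 1 ≤ n by omega)) (by omega)
    · exact absurd (hmono (show n + 1 ≤ hex.choose by omega)) (by omega)
  rw [concatSeq, dif_pos hex, hn]

def blockStart (a : ℕ → ℕ) (n : ℕ) : ℕ := ∑ i ∈ range n, 2 ^ a i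

lemma blockStart_succ (a : ℕ → ℕ) (n : ℕ) : blockStart a (n + 1) = blockStart a n + 2 ^ a n :=
  sum_range_succ _ _

lemma blockPt_apply (a : ℕ → ℕ) (e : ℕ → Bool) {n k : ℕ}
    (h₁ : blockStart a n ≤ k) (h₂ : k < blockStart a (n + 1)) :
    blockPt a e k = (e n ^^ (morseBlock (a n)).getD (k - blockStart a n) false) := by
  have hlen : ∀ m, ∑ i ∈ range m,
      (if e i then wordCompl (morseBlock (a i)) else morseBlock (a i)).length = blockStart a m :=
    fun m => sum_congr rfl fun i _ => by split_ifs <;> simp [length_wordCompl, length_morseBlock]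
  rw [blockPt, concatSeq_apply _ (by rwa [hlen]) (by rwa [hlen]), hlen]
  have hr : k - blockStart a n < (morseBlock (a n)).length := by
    rw [length_morseBlock]; rw [blockStart_succ] at h₂; omega
  cases e n
  · simp only [Bool.false_eq_true, if_false, Bool.false_xor]
  · simp only [if_true, Bool.true_xor, getD_wordCompl hr]

lemma xpt_ne_xpt_of_mem_block (a : ℕ → ℕ) {α β : ℕ → Bool} {j k : ℕ} (hj : α j ≠ β j)
    (h₁ : blockStart a (2 * j) ≤ k) (h₂ : k < blockStart a (2 * j + 1)) :
    xpt a α k ≠ xpt a β k := by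
  rw [xpt, xpt, blockPt_apply a _ h₁ h₂, blockPt_apply a _ h₁ h₂]
  simpa using hj

lemma blockStart_succ_lt (a : ℕ → ℕ) (hmono : StrictMono a) (n : ℕ) :
    blockStart a (n + 1) < 2 ^ (a n + 1) := by
  induction n with
  | zero => simp [blockStart, pow_succ]
  | succ n ih =>
    have h : 2 ^ (a n + 1) ≤ 2 ^ a (n + 1) := Nat.pow_le_pow_right two_pos (hmono n.lt_succ_self)
    rw [blockStart_succ, pow_succ 2 (a (n + 1))]
    omega

lemma strictMono_blockStart (a : ℕ → ℕ) : StrictMono (blockStart a) :=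
  strictMono_nat_of_lt_succ fun n => by
    rw [blockStart_succ]
    exact Nat.lt_add_of_pos_right (by positivity)

lemma tendsto_sub_atTop_of_tendsto_div {a : ℕ → ℕ} (hmono : StrictMono a)
    (hratio : Tendsto (fun n => (a n : ℝ) / a (n + 1)) atTop (nhds 0)) :
    Tendsto (fun n => a (n + 1) - a n) atTop atTop := by
  refine tendsto_atTop.2 fun C => ?_
  filter_upwards [hratio.eventually (gt_mem_nhds (show (0 : ℝ) < 1 / (C + 1) by positivity)),
    eventually_ge_atTop 1] with n hn hn1
  have hpos : (0 : ℝ) < a (n + 1) := by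
    exact_mod_cast (Nat.zero_le _).trans_lt (hmono n.lt_succ_self)
  rw [div_lt_div_iff₀ hpos (by positivity), one_mul] at hn
  have hlt : a n * (C + 1) < a (n + 1) := by exact_mod_cast hn
  have hC : C ≤ a n * C :=
    Nat.le_mul_of_pos_left C ((Nat.zero_le _).trans_lt (hmono.lt_iff_lt.2 hn1))
  rw [mul_add_one] at hlt
  omega

/-- `blockStart a (n + 1) < 2 ^ (a n + 1)`, which is `2 ^ a (n + 1)` divided by
`2 ^ (a (n + 1) - a n - 1) → ∞`. -/
lemma tendsto_blockStart_div {a : ℕ → ℕ} (hmono : StrictMono a)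
    (hratio : Tendsto (fun n => (a n : ℝ) / a (n + 1)) atTop (nhds 0)) :
    Tendsto (fun n => (blockStart a n : ℝ) / 2 ^ a n) atTop (nhds 0) := by
  rw [← tendsto_add_atTop_iff_nat 1]
  have hgeom : Tendsto (fun n => 2 * (1 / 2 : ℝ) ^ (a (n + 1) - a n)) atTop (nhds 0) := by
    simpa using ((tendsto_pow_atTop_nhds_zero_of_lt_one (by norm_num : (0 : ℝ) ≤ 1 / 2)
      one_half_lt_one).comp (tendsto_sub_atTop_of_tendsto_div hmono hratio)).const_mul 2
  refine squeeze_zero (fun n => by positivity) (fun n => ?_) hgeom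
  have hsplit : (2 : ℝ) ^ a (n + 1) = 2 ^ a n * 2 ^ (a (n + 1) - a n) := by
    rw [← pow_add, Nat.add_sub_cancel' (hmono n.lt_succ_self).le]
  have hlt : (blockStart a (n + 1) : ℝ) ≤ 2 * 2 ^ a n := by
    exact_mod_cast (blockStart_succ_lt a hmono n).le.trans_eq (by ring)
  calc (blockStart a (n + 1) : ℝ) / 2 ^ a (n + 1)
      ≤ 2 * 2 ^ a n / (2 ^ a n * 2 ^ (a (n + 1) - a n)) := by rw [hsplit]; gcongr
    _ = 2 * (1 / 2) ^ (a (n + 1) - a n) := by rw [one_div_pow]; field_simp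

lemma closeCount_xpt_div_le (a : ℕ → ℕ) {α β : ℕ → Bool} {j N : ℕ} {δ : ℝ} (hj : α j ≠ β j)
    (hδ : δ ≤ 1 - (1 / 2) ^ N) :
    (closeCount (xpt a α) (xpt a β) δ (blockStart a (2 * j + 1)) : ℝ) / blockStart a (2 * j + 1)
      ≤ (blockStart a (2 * j) + N) / 2 ^ a (2 * j) := by
  have hcount := closeCount_le_of_disagree (L := 2 ^ a (2 * j)) hδ
    fun t h₁ h₂ => xpt_ne_xpt_of_mem_block a hj h₁ (by rwa [blockStart_succ])
  rw [← blockStart_succ] at hcount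
  calc _ ≤ ((blockStart a (2 * j) + N : ℕ) : ℝ) / blockStart a (2 * j + 1) := by gcongr
    _ ≤ _ := by
      push_cast
      gcongr
      exact_mod_cast (blockStart_succ a (2 * j)).symm ▸ Nat.le_add_left _ _

lemma tendsto_blockStart_add_div {a : ℕ → ℕ} (hmono : StrictMono a)
    (hratio : Tendsto (fun n => (a n : ℝ) / a (n + 1)) atTop (nhds 0)) (N : ℕ) :
    Tendsto (fun n => ((blockStart a n : ℝ) + N) / 2 ^ a n) atTop (nhds 0) := by
  simp_rw [add_div]
  simpa using (tendsto_blockStart_div hmono hratio).add (tendsto_const_nhds.div_atTop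
    ((tendsto_pow_atTop_atTop_of_one_lt one_lt_two).comp hmono.tendsto_atTop))

theorem stmt11_general (a : ℕ → ℕ) (α β : ℕ → Bool) (hmono : StrictMono a)
    (hratio : Tendsto (fun n => (a n : ℝ) / (a (n + 1) : ℝ)) atTop (nhds 0))
    (hdiff : {j : ℕ | α j ≠ β j}.Infinite) :
    ∀ δ : ℝ, 0 < δ → δ < 1 → Phi (xpt a α) (xpt a β) δ = 0 := by
  intro δ _ hδ
  obtain ⟨N, hN⟩ := exists_pow_lt_of_lt_one (sub_pos.2 hδ) one_half_lt_one
  rw [Phi_eq_liminf_closeCount]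
  refine liminf_eq_zero_of_frequently_le (fun m => by positivity)
    (isBoundedUnder_of ⟨1, fun m => div_le_one_of_le₀ (by exact_mod_cast closeCount_le ..)
      (Nat.cast_nonneg _)⟩) fun ε hε => ?_
  have htwice : Tendsto (fun j : ℕ => 2 * j) atTop atTop :=
    tendsto_atTop_mono (fun j => Nat.le_mul_of_pos_left j two_pos) tendsto_id
  have hfreq : ∃ᶠ j in atTop, α j ≠ β j := Nat.frequently_atTop_iff_infinite.2 hdiff
  have hsmall : ∀ᶠ j in atTop, ((blockStart a (2 * j) : ℝ) + N) / 2 ^ a (2 * j) ≤ ε :=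
    ((tendsto_blockStart_add_div hmono hratio N).comp htwice).eventually (ge_mem_nhds hε)
  exact ((strictMono_blockStart a).tendsto_atTop.comp ((tendsto_add_atTop_nat 1).comp htwice)
    ).frequently_map _ (fun j hj => (closeCount_xpt_div_le a hj.1 (by linarith)).trans hj.2)
    (hfreq.and_eventually hsmall)

theorem stmt11 (a : ℕ → ℕ) (α β : ℕ → Bool) (hmono : StrictMono a) (hpos : ∀ n, 0 < a n)
    (hratio : Tendsto (fun n => (a n : ℝ) / (a (n + 1) : ℝ)) atTop (nhds 0))
    (hne : α ≠ β) (hdiff : {j : ℕ | α j ≠ β j}.Infinite) :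
    ∀ δ : ℝ, 0 < δ → δ < 1 → Phi (xpt a α) (xpt a β) δ = 0 :=
  stmt11_general a α β hmono hratio hdiff
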